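/- Let A ∈ 𝓡 be a fixed set and let X^(1), X^(2) be (arbitrarily dependent) random vectors in [0,∞)^d with distributions F_1, F_2 respectively, satisfying the weak tail equivalence F_1(xA) ≍ F_2(xA). (i) If F_1 ∈ 𝓢_A and F_2 ∈ 𝓛_A, then F_2 ∈ 𝓢_A. (ii) If F_1 ∈ 𝓐_A and F_2 ∈ 𝓣_A, then F_2 ∈ 𝓐_A. -/

import Mathlib

/-!
For a distribution `G` on `[0, ∞)` with i.i.d. `X₁, X₂ ∼ G`, the identity
`P[X₁ + X₂ > x] = P[X₁ + X₂ > x, X₁ ≤ x, X₂ ≤ x] + Ḡ(x) (2 - Ḡ(x))`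
shows `G ∈ 𝓢` iff `P[X₁ + X₂ > x, X₁ ≤ x, X₂ ≤ x] = o(Ḡ(x))`. On this event either a summand
is at most `h`, forcing the other into `(x - h, x]`, which has `G`-mass `o(Ḡ(x))` when
`G ∈ 𝓛`; or both exceed `h`, and there Fubini lets us replace `G` by a weakly tail-equivalent
`F ∈ 𝓢` in each coordinate at the cost of a constant factor, since only tails beyond `h` enter.
The second part is then `o(Ḡ(x)) + O(F̄(h)) Ḡ(x)`, and `h → ∞` gives `G ∈ 𝓢`.

Since `Aᶜ` is convex and contains `0`, `t A ⊆ A` for `t ≥ 1`; with `A` open this gives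
`{Y_A > x} = {X ∈ x A}` for `x > 0`, so `F₁_A` and `F₂_A` are weakly tail-equivalent and the
above applies to them. Part (ii) follows, since `F₂_A ∈ 𝓣` already contains the `𝓟𝓓` half of `𝓐`.
-/

open MeasureTheory ProbabilityTheory Filter Topology
open scoped Pointwise

namespace Paper

variable {d : ℕ} {Ω : Type*} [MeasurableSpace Ω]

/-- The family `𝓡` of open, increasing sets with convex complement, bounded away from `0`. -/
structure IsRSet (d : ℕ) (A : Set (Fin d → ℝ)) : Prop where
  isOpen : IsOpen A
  increasing : ∀ u ∈ A, ∀ v : Fin d → ℝ, (∀ i, 0 ≤ v i) → u + v ∈ A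
  convex_compl : Convex ℝ Aᶜ
  zero_notMem_closure : (0 : Fin d → ℝ) ∉ closure A

/-- `Y_A(z) = sup { u > 0 : z ∈ u A }`. -/
noncomputable def suprA (A : Set (Fin d → ℝ)) (z : Fin d → ℝ) : ℝ :=
  sSup {u : ℝ | 0 < u ∧ z ∈ u • A}

/-- `F_A`, the distribution of `Y_A = suprA A ∘ X` under `P`. -/
noncomputable def FA (P : Measure Ω) (A : Set (Fin d → ℝ)) (X : Ω → Fin d → ℝ) :
    Measure ℝ :=
  P.map (fun ω => suprA A (X ω))

/-- `F (x A) = P[X ∈ x A]` as a real number. -/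
noncomputable def vTail (P : Measure Ω) (A : Set (Fin d → ℝ)) (X : Ω → Fin d → ℝ)
    (x : ℝ) : ℝ :=
  (P {ω | X ω ∈ x • A}).toReal

/-- Tail `ν(x, ∞)` of a measure on `ℝ`, as a real number. -/
noncomputable def mTail (ν : Measure ℝ) (x : ℝ) : ℝ := (ν (Set.Ioi x)).toReal

/-- Convolution of two measures on `ℝ`. -/
noncomputable def mConv (μ ν : Measure ℝ) : Measure ℝ :=
  (μ.prod ν).map (fun p => p.1 + p.2)

/-- `n`-fold convolution power. -/
noncomputable def mConvN (ν : Measure ℝ) : ℕ → Measure ℝ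
  | 0 => Measure.dirac 0
  | n + 1 => mConv (mConvN ν n) ν

/-- Long-tailed class `𝓛`. -/
def MemL (ν : Measure ℝ) : Prop :=
  ∀ a : ℝ, 0 < a → Tendsto (fun x => mTail ν (x - a) / mTail ν x) atTop (𝓝 1)

/-- Subexponential class `𝓢`. -/
def MemS (ν : Measure ℝ) : Prop :=
  Tendsto (fun x => mTail (mConv ν ν) x / mTail ν x) atTop (𝓝 2)

/-- Dominatedly varying class `𝓓`. -/
def MemD (ν : Measure ℝ) : Prop :=
  ∀ y : ℝ, 0 < y → y < 1 → ∃ C : ℝ, ∀ᶠ x in atTop, mTail ν (y * x) / mTail ν x ≤ C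

/-- Positively decreasing class `𝓟𝓓`. -/
def MemPD (ν : Measure ℝ) : Prop :=
  ∀ b : ℝ, 1 < b → ∃ c : ℝ, c < 1 ∧ ∀ᶠ x in atTop, mTail ν (b * x) / mTail ν x ≤ c

/-- Consistently varying class `𝓒`. -/
def MemC (ν : Measure ℝ) : Prop :=
  Tendsto (fun b : ℝ => Filter.liminf (fun x => mTail ν (b * x) / mTail ν x) atTop)
    (nhdsWithin 1 (Set.Ioi 1)) (𝓝 1)

/-- `𝓐 = 𝓢 ∩ 𝓟𝓓`. -/
def MemA (ν : Measure ℝ) : Prop := MemS ν ∧ MemPD ν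

/-- `𝓣 = 𝓛 ∩ 𝓟𝓓`. -/
def MemT (ν : Measure ℝ) : Prop := MemL ν ∧ MemPD ν

/-- Regular variation of index `-α` of the tail of `ν`. -/
def MemRV (ν : Measure ℝ) (α : ℝ) : Prop :=
  ∀ t : ℝ, 0 < t → Tendsto (fun x => mTail ν (t * x) / mTail ν x) atTop (𝓝 (t ^ (-α)))

/-- Weak tail-equivalence `f ≍ g`. -/
def WeakTailEquiv (f g : ℝ → ℝ) : Prop :=
  ∃ c₁ c₂ : ℝ, 0 < c₁ ∧ ∀ᶠ x in atTop, c₁ * g x ≤ f x ∧ f x ≤ c₂ * g x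

/-- (Standard) multivariate regular variation `F ∈ MRV(α, V, μ)` of the distribution of `X`. -/
structure IsMRV (P : Measure Ω) (X : Ω → Fin d → ℝ) (α : ℝ) (V : Measure ℝ)
    (μ : Measure (Fin d → ℝ)) : Prop where
  alpha_pos : 0 < α
  V_prob : IsProbabilityMeasure V
  V_rv : MemRV V α
  mu_ne_zero : ∃ B : Set (Fin d → ℝ), (0 : Fin d → ℝ) ∉ closure B ∧ 0 < μ B
  mu_radon : ∀ B : Set (Fin d → ℝ), (0 : Fin d → ℝ) ∉ closure B → μ B ≠ ⊤
  tendsto : ∀ B : Set (Fin d → ℝ), MeasurableSet B → (0 : Fin d → ℝ) ∉ closure B →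
    μ (frontier B) = 0 →
    Tendsto (fun x => vTail P B X x / mTail V x) atTop (𝓝 ((μ B).toReal))

/-- Support of a distribution on `ℝ`. -/
def measSupport (ν : Measure ℝ) : Set ℝ := {t | ∀ U ∈ 𝓝 t, 0 < ν U}

/-- Assumption `CD_A`: conditional dependence of `(X, Θ)` on `A` with transfer function `h`:
`P[Y_A > x | Θ = t] ~ h(t) P[Y_A > x]` uniformly on the support of the distribution of `Θ`. -/
def CDA (P : Measure Ω) [IsFiniteMeasure P] (A : Set (Fin d → ℝ))
    (X : Ω → Fin d → ℝ) (Θ : Ω → ℝ) (h : ℝ → ℝ) : Prop :=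
  ∀ ε : ℝ, 0 < ε → ∀ᶠ x in atTop, ∀ t ∈ measSupport (P.map Θ),
    |((condDistrib (fun ω => suprA A (X ω)) Θ P) t (Set.Ioi x)).toReal /
        (h t * (P {ω | x < suprA A (X ω)}).toReal) - 1| ≤ ε

/-- Assumption `B_A`: `P[Θ > c x] = o(P[Θ Y_A > x])` for all `c > 0`. -/
def BA (P : Measure Ω) (A : Set (Fin d → ℝ)) (X : Ω → Fin d → ℝ) (Θ : Ω → ℝ) : Prop :=
  ∀ c : ℝ, 0 < c →
    Tendsto (fun x => (P {ω | c * x < Θ ω}).toReal /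
      (P {ω | x < Θ ω * suprA A (X ω)}).toReal) atTop (𝓝 0)

/-- Assumption `B_A` in the form `P[Θ > c x] = o(P[Θ X ∈ x A])` for all `c > 0`. -/
def BA' (P : Measure Ω) (A : Set (Fin d → ℝ)) (X : Ω → Fin d → ℝ) (Θ : Ω → ℝ) : Prop :=
  ∀ c : ℝ, 0 < c →
    Tendsto (fun x => (P {ω | c * x < Θ ω}).toReal /
      (P {ω | Θ ω • X ω ∈ x • A}).toReal) atTop (𝓝 0)

open Set
open scoped ENNReal

lemma squeeze_zero_of_family {α β : Type*} {l : Filter α} {L : Filter β} [L.NeBot]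
    {f : α → ℝ} (hf : ∀ᶠ x in l, 0 ≤ f x) (g : β → α → ℝ) (b : β → ℝ)
    (hb : Tendsto b L (𝓝 0)) (hg : ∀ᶠ h in L, Tendsto (g h) l (𝓝 (b h)))
    (hfg : ∀ᶠ h in L, ∀ᶠ x in l, f x ≤ g h x) : Tendsto f l (𝓝 0) := by
  refine tendsto_order.2 ⟨fun a ha => hf.mono fun x hx => ha.trans_le hx, fun ε hε => ?_⟩
  obtain ⟨h, hbh, hgh, hfgh⟩ := ((hb.eventually (gt_mem_nhds hε)).and (hg.and hfg)).exists
  filter_upwards [hgh.eventually (gt_mem_nhds hbh), hfgh] with x hgx hfx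
  exact hfx.trans_lt hgx

lemma WeakTailEquiv.congr' {f g f' g' : ℝ → ℝ} (hfg : WeakTailEquiv f g)
    (hf : f =ᶠ[atTop] f') (hg : g =ᶠ[atTop] g') : WeakTailEquiv f' g' := by
  obtain ⟨c₁, c₂, hc₁, hev⟩ := hfg
  refine ⟨c₁, c₂, hc₁, ?_⟩
  filter_upwards [hev, hf, hg] with x hx hfx hgx
  rwa [← hfx, ← hgx]

lemma mTail_nonneg (ρ : Measure ℝ) (x : ℝ) : 0 ≤ mTail ρ x := ENNReal.toReal_nonneg

lemma tendsto_mTail_atTop (ρ : Measure ℝ) [IsFiniteMeasure ρ] :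
    Tendsto (mTail ρ) atTop (𝓝 0) := by
  have h := tendsto_measure_iInter_atTop (μ := ρ)
    (fun x : ℝ => measurableSet_Ioi.nullMeasurableSet) (fun _ _ hxy => Ioi_subset_Ioi hxy)
    ⟨0, measure_ne_top _ _⟩
  have hempty : (⋂ x : ℝ, Ioi x) = ∅ := iInter_eq_empty_iff.2 fun y => ⟨y, lt_irrefl y⟩
  rw [hempty, measure_empty] at h
  exact (ENNReal.tendsto_toReal ENNReal.zero_ne_top).comp h

lemma mTail_pos_of_memL {ρ : Measure ℝ} [IsFiniteMeasure ρ] (hL : MemL ρ) (x : ℝ) :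
    0 < mTail ρ x := by
  refine (mTail_nonneg ρ x).lt_of_ne fun hx => ?_
  have hzero : ∀ y ≥ x, mTail ρ y = 0 := fun y hy => le_antisymm
    (hx ▸ ENNReal.toReal_mono (measure_ne_top _ _) (measure_mono (Ioi_subset_Ioi hy)))
    (mTail_nonneg ρ y)
  have h0 : Tendsto (fun y => mTail ρ (y - 1) / mTail ρ y) atTop (𝓝 0) :=
    tendsto_const_nhds.congr' <| (eventually_ge_atTop (x + 1)).mono fun y hy => by
      simp only [hzero (y - 1) (by linarith), zero_div]
  exact one_ne_zero (tendsto_nhds_unique (hL 1 one_pos) h0)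

lemma toReal_measure_Ioc (ρ : Measure ℝ) [IsFiniteMeasure ρ] {a b : ℝ} (hab : a ≤ b) :
    (ρ (Ioc a b)).toReal = mTail ρ a - mTail ρ b := by
  rw [← Ioi_sdiff_Ioi, ← measureReal_def, measureReal_sdiff (Ioi_subset_Ioi hab)
    measurableSet_Ioi]
  rfl

def sumAboveBothBelow (x : ℝ) : Set (ℝ × ℝ) := {p | x < p.1 + p.2 ∧ p.1 ≤ x ∧ p.2 ≤ x}

def sumAboveBothAbove (h x : ℝ) : Set (ℝ × ℝ) := {p | h < p.1 ∧ h < p.2 ∧ x < p.1 + p.2}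

lemma measurableSet_sumAboveBothBelow (x : ℝ) : MeasurableSet (sumAboveBothBelow x) :=
  (measurableSet_lt measurable_const (measurable_fst.add measurable_snd)).inter
    ((measurable_fst measurableSet_Iic).inter (measurable_snd measurableSet_Iic))

lemma measurableSet_sumAboveBothAbove (h x : ℝ) : MeasurableSet (sumAboveBothAbove h x) :=
  (measurable_fst measurableSet_Ioi).inter ((measurable_snd measurableSet_Ioi).inter
    (measurableSet_lt measurable_const (measurable_fst.add measurable_snd)))

noncomputable def sumTailBothBelow (ρ : Measure ℝ) (x : ℝ) : ℝ :=
  ((ρ.prod ρ) (sumAboveBothBelow x)).toReal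

lemma sumTailBothBelow_nonneg (ρ : Measure ℝ) (x : ℝ) : 0 ≤ sumTailBothBelow ρ x :=
  ENNReal.toReal_nonneg

variable {ρ : Measure ℝ}

lemma mConv_self_Ioi [IsProbabilityMeasure ρ] (h0 : ρ (Iio 0) = 0) (x : ℝ) :
    mConv ρ ρ (Ioi x) =
      (ρ.prod ρ) (sumAboveBothBelow x) + ρ (Ioi x) + ρ (Iic x) * ρ (Ioi x) := by
  have hadd : Measurable fun p : ℝ × ℝ => p.1 + p.2 := measurable_fst.add measurable_snd
  have hnonneg : ∀ᵐ p ∂(ρ.prod ρ), 0 ≤ p.1 ∧ 0 ≤ p.2 := by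
    have h : ∀ᵐ a ∂ρ, 0 ≤ a := (measure_eq_zero_iff_ae_notMem.1 h0).mono fun a ha => not_lt.1 ha
    exact (Measure.quasiMeasurePreserving_fst.ae h).and (Measure.quasiMeasurePreserving_snd.ae h)
  have hsplit : (fun p : ℝ × ℝ => p.1 + p.2) ⁻¹' Ioi x =ᵐ[ρ.prod ρ]
      (sumAboveBothBelow x ∪ (Ioi x ×ˢ univ ∪ Iic x ×ˢ Ioi x) : Set (ℝ × ℝ)) := by
    refine eventuallyEq_set.2 (hnonneg.mono fun p ⟨h1, h2⟩ => ?_)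
    simp only [sumAboveBothBelow, mem_preimage, mem_union, mem_ofPred_eq, mem_prod, mem_Ioi,
      mem_Iic, mem_univ, and_true]
    constructor
    · intro hp
      rcases le_or_gt p.1 x with hp1 | hp1
      · rcases le_or_gt p.2 x with hp2 | hp2
        · exact Or.inl ⟨hp, hp1, hp2⟩
        · exact Or.inr (Or.inr ⟨hp1, hp2⟩)
      · exact Or.inr (Or.inl hp1)
    · rintro (⟨hp, -⟩ | hp | ⟨-, hp⟩) <;> linarith
  have hdisj₁ : Disjoint (sumAboveBothBelow x) (Ioi x ×ˢ univ ∪ Iic x ×ˢ Ioi x) := by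
    refine disjoint_left.2 fun p ⟨_, hp1, hp2⟩ hp => ?_
    simp only [mem_union, mem_prod, mem_Ioi, mem_Iic] at hp
    rcases hp with ⟨hp, -⟩ | ⟨-, hp⟩ <;> linarith
  have hdisj₂ : Disjoint (Ioi x ×ˢ (univ : Set ℝ)) (Iic x ×ˢ Ioi x) :=
    disjoint_left.2 fun _ ⟨hp, _⟩ ⟨hp', _⟩ => not_lt.2 (mem_Iic.1 hp') (mem_Ioi.1 hp)
  rw [mConv, Measure.map_apply hadd measurableSet_Ioi, measure_congr hsplit,
    measure_union hdisj₁ ((measurableSet_Ioi.prod MeasurableSet.univ).union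
      (measurableSet_Iic.prod measurableSet_Ioi)),
    measure_union hdisj₂ (measurableSet_Iic.prod measurableSet_Ioi),
    Measure.prod_prod, Measure.prod_prod, measure_univ, mul_one, add_assoc]

lemma mTail_mConv_self [IsProbabilityMeasure ρ] (h0 : ρ (Iio 0) = 0) (x : ℝ) :
    mTail (mConv ρ ρ) x = sumTailBothBelow ρ x + mTail ρ x * (2 - mTail ρ x) := by
  have hIic : (ρ (Iic x)).toReal = 1 - mTail ρ x := by
    rw [← compl_Ioi, prob_compl_eq_one_sub measurableSet_Ioi,
      ENNReal.toReal_sub_of_le prob_le_one ENNReal.one_ne_top, ENNReal.toReal_one]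
    rfl
  rw [mTail, mConv_self_Ioi h0, ENNReal.toReal_add (by finiteness) (by finiteness),
    ENNReal.toReal_add (by finiteness) (by finiteness), ENNReal.toReal_mul, hIic]
  unfold sumTailBothBelow mTail
  ring

lemma memS_iff_tendsto_sumTailBothBelow [IsProbabilityMeasure ρ] (h0 : ρ (Iio 0) = 0)
    (hpos : ∀ᶠ x in atTop, mTail ρ x ≠ 0) :
    MemS ρ ↔ Tendsto (fun x => sumTailBothBelow ρ x / mTail ρ x) atTop (𝓝 0) := by
  have hratio : (fun x => mTail (mConv ρ ρ) x / mTail ρ x) =ᶠ[atTop]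
      fun x => sumTailBothBelow ρ x / mTail ρ x + (2 - mTail ρ x) :=
    hpos.mono fun x hx => by
      simp only [mTail_mConv_self h0, add_div, mul_div_cancel_left₀ _ hx]
  have htail := tendsto_mTail_atTop ρ
  rw [MemS, tendsto_congr' hratio]
  constructor
  · intro h
    simpa using (h.sub (tendsto_const_nhds (x := (2 : ℝ)) |>.sub htail))
  · intro h
    simpa using h.add (tendsto_const_nhds (x := (2 : ℝ)) |>.sub htail)

lemma prod_sumAboveBothAbove_comm (σ ρ : Measure ℝ) [SFinite σ] [SFinite ρ] (h x : ℝ) :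
    (σ.prod ρ) (sumAboveBothAbove h x) = (ρ.prod σ) (sumAboveBothAbove h x) := by
  rw [← Measure.prod_swap, Measure.map_apply measurable_swap
    (measurableSet_sumAboveBothAbove h x)]
  congr 1
  ext p
  simp only [sumAboveBothAbove, mem_preimage, Prod.fst_swap, Prod.snd_swap, mem_ofPred_eq,
    add_comm p.2]
  tauto

/-- The section of `sumAboveBothAbove h x` at `a > h` is the tail `(max h (x - a), ∞)`, on
which `ρ` is dominated by `k ρ'`. -/
lemma prod_sumAboveBothAbove_le (σ : Measure ℝ) {ρ ρ' : Measure ℝ} [SFinite ρ] [SFinite ρ']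
    {k : ℝ≥0∞} (hk : k ≠ ⊤) {h : ℝ} (hdom : ∀ s, h ≤ s → ρ (Ioi s) ≤ k * ρ' (Ioi s))
    (x : ℝ) :
    (σ.prod ρ) (sumAboveBothAbove h x) ≤ k * (σ.prod ρ') (sumAboveBothAbove h x) := by
  rw [Measure.prod_apply (measurableSet_sumAboveBothAbove h x),
    Measure.prod_apply (measurableSet_sumAboveBothAbove h x), ← lintegral_const_mul' k _ hk]
  refine lintegral_mono fun a => ?_
  by_cases ha : h < a
  · have hsec : Prod.mk a ⁻¹' sumAboveBothAbove h x = Ioi (max h (x - a)) := by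
      ext b
      simp only [sumAboveBothAbove, mem_preimage, mem_ofPred_eq, mem_Ioi, max_lt_iff, ha,
        true_and, sub_lt_iff_lt_add']
    rw [hsec]
    exact hdom _ (le_max_left _ _)
  · have hsec : Prod.mk a ⁻¹' sumAboveBothAbove h x = ∅ :=
      eq_empty_of_forall_notMem fun b hb => ha hb.1
    simp [hsec]

lemma prod_sumAboveBothBelow_le (ρ : Measure ℝ) [IsProbabilityMeasure ρ] (h x : ℝ) :
    (ρ.prod ρ) (sumAboveBothBelow x) ≤
      2 * ρ (Ioc (x - h) x) + (ρ.prod ρ) (sumAboveBothAbove h x) := by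
  have hcover : sumAboveBothBelow x ⊆
      (univ ×ˢ Ioc (x - h) x ∪ Ioc (x - h) x ×ˢ univ) ∪ sumAboveBothAbove h x := by
    rintro p ⟨hp, hp1, hp2⟩
    simp only [sumAboveBothAbove, mem_union, mem_prod, mem_univ, mem_Ioc, mem_ofPred_eq,
      true_and, and_true]
    rcases le_or_gt p.1 h with h1 | h1
    · exact Or.inl (Or.inl ⟨by linarith, hp2⟩)
    · rcases le_or_gt p.2 h with h2 | h2
      · exact Or.inl (Or.inr ⟨by linarith, hp1⟩)
      · exact Or.inr ⟨h1, h2, hp⟩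
  calc (ρ.prod ρ) (sumAboveBothBelow x)
      ≤ (ρ.prod ρ) (univ ×ˢ Ioc (x - h) x) + (ρ.prod ρ) (Ioc (x - h) x ×ˢ univ) +
          (ρ.prod ρ) (sumAboveBothAbove h x) :=
        (measure_mono hcover).trans <| (measure_union_le _ _).trans <|
          add_le_add_left (measure_union_le _ _) _
    _ = 2 * ρ (Ioc (x - h) x) + (ρ.prod ρ) (sumAboveBothAbove h x) := by
        rw [Measure.prod_prod, Measure.prod_prod, measure_univ, one_mul, mul_one, two_mul]

lemma prod_sumAboveBothAbove_le_sumAboveBothBelow (ρ : Measure ℝ) [SFinite ρ] (h x : ℝ) :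
    (ρ.prod ρ) (sumAboveBothAbove h x) ≤
      (ρ.prod ρ) (sumAboveBothBelow x) + 2 * (ρ (Ioi h) * ρ (Ioi x)) := by
  have hcover : sumAboveBothAbove h x ⊆
      sumAboveBothBelow x ∪ (Ioi x ×ˢ Ioi h ∪ Ioi h ×ˢ Ioi x) := by
    rintro p ⟨h1, h2, hp⟩
    simp only [sumAboveBothBelow, mem_union, mem_prod, mem_Ioi, mem_ofPred_eq]
    rcases le_or_gt p.1 x with hp1 | hp1
    · rcases le_or_gt p.2 x with hp2 | hp2
      · exact Or.inl ⟨hp, hp1, hp2⟩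
      · exact Or.inr (Or.inr ⟨h1, hp2⟩)
    · exact Or.inr (Or.inl ⟨hp1, h2⟩)
  calc (ρ.prod ρ) (sumAboveBothAbove h x)
      ≤ (ρ.prod ρ) (sumAboveBothBelow x) +
          ((ρ.prod ρ) (Ioi x ×ˢ Ioi h) + (ρ.prod ρ) (Ioi h ×ˢ Ioi x)) :=
        (measure_mono hcover).trans <| (measure_union_le _ _).trans <|
          add_le_add_right (measure_union_le _ _) _
    _ = (ρ.prod ρ) (sumAboveBothBelow x) + 2 * (ρ (Ioi h) * ρ (Ioi x)) := by
        rw [Measure.prod_prod, Measure.prod_prod, mul_comm (ρ (Ioi x)), two_mul]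

section Closure

variable {μ ν : Measure ℝ} [IsProbabilityMeasure μ] [IsProbabilityMeasure ν]

lemma sumTailBothBelow_le {c h : ℝ} (hc : 0 ≤ c) (hh : 0 ≤ h)
    (hdom : ∀ s, h ≤ s → mTail ν s ≤ c * mTail μ s) (x : ℝ) :
    sumTailBothBelow ν x ≤ 2 * (mTail ν (x - h) - mTail ν x) +
      c ^ 2 * (sumTailBothBelow μ x + 2 * (mTail μ h * mTail μ x)) := by
  set k := ENNReal.ofReal c
  have hk : k ≠ ⊤ := ENNReal.ofReal_ne_top
  have hdomE : ∀ s, h ≤ s → ν (Ioi s) ≤ k * μ (Ioi s) := fun s hs => by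
    rw [← ENNReal.ofReal_toReal (measure_ne_top ν _),
      ← ENNReal.ofReal_toReal (measure_ne_top μ (Ioi s)), ← ENNReal.ofReal_mul hc]
    exact ENNReal.ofReal_le_ofReal (hdom s hs)
  have hG : (ν.prod ν) (sumAboveBothAbove h x) ≤ k * (k * (μ.prod μ) (sumAboveBothAbove h x)) :=
    calc (ν.prod ν) (sumAboveBothAbove h x)
        ≤ k * (ν.prod μ) (sumAboveBothAbove h x) := prod_sumAboveBothAbove_le ν hk hdomE x
      _ = k * (μ.prod ν) (sumAboveBothAbove h x) := by rw [prod_sumAboveBothAbove_comm]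
      _ ≤ k * (k * (μ.prod μ) (sumAboveBothAbove h x)) := by
        gcongr
        exact prod_sumAboveBothAbove_le μ hk hdomE x
  have hE : (ν.prod ν) (sumAboveBothBelow x) ≤ 2 * ν (Ioc (x - h) x) +
      k * (k * ((μ.prod μ) (sumAboveBothBelow x) + 2 * (μ (Ioi h) * μ (Ioi x)))) :=
    calc (ν.prod ν) (sumAboveBothBelow x)
        ≤ 2 * ν (Ioc (x - h) x) + (ν.prod ν) (sumAboveBothAbove h x) :=
          prod_sumAboveBothBelow_le ν h x
      _ ≤ _ := by
        gcongr
        exact hG.trans (by gcongr; exact prod_sumAboveBothAbove_le_sumAboveBothBelow μ h x)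
  have hreal := ENNReal.toReal_mono (by finiteness) hE
  rw [ENNReal.toReal_add (by finiteness) (by finiteness), ENNReal.toReal_mul,
    ENNReal.toReal_mul, ENNReal.toReal_mul, ENNReal.toReal_add (by finiteness) (by finiteness),
    ENNReal.toReal_mul, ENNReal.toReal_mul, ENNReal.toReal_ofReal hc, ENNReal.toReal_ofNat,
    toReal_measure_Ioc ν (by linarith : x - h ≤ x)] at hreal
  unfold sumTailBothBelow mTail at *
  linarith

lemma sumTailBothBelow_div_le {c₁ c₂ h x : ℝ} (hc₁ : 0 < c₁) (hh : 0 ≤ h)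
    (hdom : ∀ s, h ≤ s → c₁ * mTail ν s ≤ mTail μ s) (hx : mTail μ x ≤ c₂ * mTail ν x)
    (hμx : 0 < mTail μ x) (hνx : 0 < mTail ν x) :
    sumTailBothBelow ν x / mTail ν x ≤ 2 * (mTail ν (x - h) / mTail ν x - 1) +
      c₁⁻¹ ^ 2 * c₂ * (sumTailBothBelow μ x / mTail μ x + 2 * mTail μ h) := by
  have hdom' : ∀ s, h ≤ s → mTail ν s ≤ c₁⁻¹ * mTail μ s := fun s hs =>
    (le_inv_mul_iff₀ hc₁).2 (hdom s hs)
  have hratio : 0 ≤ sumTailBothBelow μ x / mTail μ x + 2 * mTail μ h := by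
    have := sumTailBothBelow_nonneg μ x
    have := mTail_nonneg μ h
    positivity
  rw [div_le_iff₀ hνx]
  calc sumTailBothBelow ν x
      ≤ 2 * (mTail ν (x - h) - mTail ν x) +
        c₁⁻¹ ^ 2 * (sumTailBothBelow μ x + 2 * (mTail μ h * mTail μ x)) :=
        sumTailBothBelow_le (inv_nonneg.2 hc₁.le) hh hdom' x
    _ = 2 * (mTail ν (x - h) - mTail ν x) + c₁⁻¹ ^ 2 *
        ((sumTailBothBelow μ x / mTail μ x + 2 * mTail μ h) * mTail μ x) := by
        field_simp
    _ ≤ 2 * (mTail ν (x - h) - mTail ν x) + c₁⁻¹ ^ 2 *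
        ((sumTailBothBelow μ x / mTail μ x + 2 * mTail μ h) * (c₂ * mTail ν x)) := by
        gcongr
    _ = _ := by
        field_simp

theorem memS_of_weakTailEquiv (h0μ : μ (Iio 0) = 0) (h0ν : ν (Iio 0) = 0)
    (hequiv : WeakTailEquiv (mTail μ) (mTail ν)) (hS : MemS μ) (hL : MemL ν) : MemS ν := by
  obtain ⟨c₁, c₂, hc₁, hev⟩ := hequiv
  obtain ⟨x₀, hx₀⟩ := eventually_atTop.1 hev
  have hνpos := mTail_pos_of_memL hL
  have hμpos : ∀ᶠ x in atTop, 0 < mTail μ x :=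
    hev.mono fun x hx => (mul_pos hc₁ (hνpos x)).trans_le hx.1
  have hμ := (memS_iff_tendsto_sumTailBothBelow h0μ (hμpos.mono fun _ hx => hx.ne')).1 hS
  rw [memS_iff_tendsto_sumTailBothBelow h0ν (.of_forall fun x => (hνpos x).ne')]
  set K := c₁⁻¹ ^ 2 * c₂
  refine squeeze_zero_of_family (L := atTop)
    (.of_forall fun x => div_nonneg (sumTailBothBelow_nonneg ν x) (mTail_nonneg ν x))
    (fun h x => 2 * (mTail ν (x - h) / mTail ν x - 1) +
      K * (sumTailBothBelow μ x / mTail μ x + 2 * mTail μ h))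
    (fun h => K * (2 * mTail μ h)) ?_ ?_ ?_
  · simpa using ((tendsto_mTail_atTop μ).const_mul 2).const_mul K
  · filter_upwards [eventually_gt_atTop 0] with h hh
    simpa using (((hL h hh).sub_const 1).const_mul 2).add
      ((hμ.add_const (2 * mTail μ h)).const_mul K)
  · filter_upwards [eventually_ge_atTop (max x₀ 0)] with h hh
    filter_upwards [eventually_ge_atTop x₀, hμpos] with x hx hμx
    exact sumTailBothBelow_div_le hc₁ (le_of_max_le_right hh)
      (fun s hs => (hx₀ s (le_of_max_le_left (hh.trans hs))).1) (hx₀ x hx).2 hμx (hνpos x)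

end Closure

namespace IsRSet

variable {A : Set (Fin d → ℝ)}

lemma smul_mem (hA : IsRSet d A) {a : Fin d → ℝ} (ha : a ∈ A) {t : ℝ} (ht : 1 ≤ t) :
    t • a ∈ A := by
  by_contra hta
  have h0 : (0 : Fin d → ℝ) ∈ Aᶜ := fun h => hA.zero_notMem_closure (subset_closure h)
  have ht0 : t ≠ 0 := (one_pos.trans_le ht).ne'
  have := hA.convex_compl.smul_mem_of_zero_mem h0 hta
    ⟨inv_nonneg.2 (zero_le_one.trans ht), inv_le_one_of_one_le₀ ht⟩
  rw [smul_smul, inv_mul_cancel₀ ht0, one_smul] at this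
  exact this ha

lemma exists_pos_le_norm (hA : IsRSet d A) : ∃ ε > 0, ∀ a ∈ A, ε ≤ ‖a‖ := by
  obtain ⟨ε, hε, hball⟩ := Metric.isOpen_iff.1 isClosed_closure.isOpen_compl
    0 hA.zero_notMem_closure
  refine ⟨ε, hε, fun a ha => not_lt.1 fun hlt => hball ?_ (subset_closure ha)⟩
  simpa using hlt

lemma bddAbove_scales (hA : IsRSet d A) (z : Fin d → ℝ) :
    BddAbove {u : ℝ | 0 < u ∧ z ∈ u • A} := by
  obtain ⟨ε, hε, hA_norm⟩ := hA.exists_pos_le_norm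
  refine ⟨‖z‖ / ε, fun u ⟨hu, a, ha, hz⟩ => ?_⟩
  rw [le_div_iff₀ hε, ← hz, norm_smul, Real.norm_of_nonneg hu.le]
  exact mul_le_mul_of_nonneg_left (hA_norm a ha) hu.le

lemma suprA_nonneg (hA : IsRSet d A) (z : Fin d → ℝ) : 0 ≤ suprA A z := by
  rcases {u : ℝ | 0 < u ∧ z ∈ u • A}.eq_empty_or_nonempty with h | ⟨u, hu⟩
  · simp [suprA, h]
  · exact hu.1.le.trans (le_csSup (hA.bddAbove_scales z) hu)

lemma lt_suprA_iff (hA : IsRSet d A) {x : ℝ} (hx : 0 < x) (z : Fin d → ℝ) :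
    x < suprA A z ↔ z ∈ x • A := by
  rw [mem_smul_set_iff_inv_smul_mem₀ hx.ne']
  constructor
  · intro hlt
    have hne : {u : ℝ | 0 < u ∧ z ∈ u • A}.Nonempty :=
      nonempty_iff_ne_empty.2 fun h => by simp only [suprA, h, Real.sSup_empty] at hlt; linarith
    obtain ⟨u, ⟨hu, hzu⟩, hxu⟩ := exists_lt_of_lt_csSup hne hlt
    rw [mem_smul_set_iff_inv_smul_mem₀ hu.ne'] at hzu
    have := hA.smul_mem hzu ((one_le_div hx).2 hxu.le)
    rwa [smul_smul, div_mul_eq_mul_div, mul_inv_cancel₀ hu.ne', one_div] at this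
  · intro hz
    have hcont : ContinuousAt (fun u : ℝ => u⁻¹ • z) x :=
      (continuousAt_inv₀ hx.ne').smul continuousAt_const
    obtain ⟨u, hzu, hxu⟩ := ((hcont.eventually_mem (hA.isOpen.mem_nhds hz)).filter_mono
      nhdsWithin_le_nhds |>.and (self_mem_nhdsWithin (s := Ioi x))).exists
    have hu : 0 < u := hx.trans hxu
    refine hxu.trans_le (le_csSup (hA.bddAbove_scales z) ⟨hu, ?_⟩)
    rwa [mem_smul_set_iff_inv_smul_mem₀ hu.ne']

lemma lowerSemicontinuous_suprA (hA : IsRSet d A) : LowerSemicontinuous (suprA A) := by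
  refine lowerSemicontinuous_iff_isOpen_preimage.2 fun x => ?_
  rcases lt_or_ge x 0 with hx | hx
  · convert isOpen_univ
    exact eq_univ_of_forall fun z => hx.trans_le (hA.suprA_nonneg z)
  · have : suprA A ⁻¹' Ioi x = ⋃ u ∈ Ioi x, u • A := by
      ext z
      simp only [mem_preimage, mem_Ioi, mem_iUnion, exists_prop]
      constructor
      · intro hz
        obtain ⟨u, hxu, huz⟩ := exists_between hz
        exact ⟨u, hxu, (hA.lt_suprA_iff (hx.trans_lt hxu) z).1 huz⟩
      · rintro ⟨u, hxu, hz⟩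
        exact hxu.trans ((hA.lt_suprA_iff (hx.trans_lt hxu) z).2 hz)
    rw [this]
    exact isOpen_biUnion fun u hu => hA.isOpen.smul₀ (hx.trans_lt hu).ne'

end IsRSet

section Distribution

variable {P : Measure Ω} {A : Set (Fin d → ℝ)} {X : Ω → Fin d → ℝ}

lemma measurable_suprA_comp (hA : IsRSet d A) (hX : Measurable X) :
    Measurable fun ω => suprA A (X ω) :=
  hA.lowerSemicontinuous_suprA.measurable.comp hX

lemma isProbabilityMeasure_FA [IsProbabilityMeasure P] (hA : IsRSet d A) (hX : Measurable X) :
    IsProbabilityMeasure (FA P A X) :=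
  Measure.isProbabilityMeasure_map (measurable_suprA_comp hA hX).aemeasurable

lemma FA_Iio_zero (hA : IsRSet d A) (hX : Measurable X) : FA P A X (Iio 0) = 0 := by
  rw [FA, Measure.map_apply (measurable_suprA_comp hA hX) measurableSet_Iio]
  convert measure_empty (μ := P)
  exact eq_empty_of_forall_notMem fun ω => not_lt.2 (hA.suprA_nonneg (X ω))

lemma mTail_FA_eventuallyEq (hA : IsRSet d A) (hX : Measurable X) :
    mTail (FA P A X) =ᶠ[atTop] vTail P A X := by
  filter_upwards [eventually_gt_atTop 0] with x hx
  rw [mTail, FA, Measure.map_apply (measurable_suprA_comp hA hX) measurableSet_Ioi, vTail]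
  congr 2
  ext ω
  exact hA.lt_suprA_iff hx (X ω)

end Distribution

/-- Closure of `𝓢_A` (resp. `𝓐_A`) under weak tail-equivalence:
if `F₁ ∈ 𝓢_A` (resp. `𝓐_A`), `F₂ ∈ 𝓛_A` (resp. `𝓣_A`) and `F₁(xA) ≍ F₂(xA)`,
then `F₂ ∈ 𝓢_A` (resp. `𝓐_A`). -/
theorem statement3 (P : Measure Ω) [IsProbabilityMeasure P]
    (A : Set (Fin d → ℝ)) (hA : IsRSet d A)
    (X₁ X₂ : Ω → Fin d → ℝ) (hX₁ : Measurable X₁) (hX₂ : Measurable X₂)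
    (hweq : WeakTailEquiv (vTail P A X₁) (vTail P A X₂)) :
    (MemS (FA P A X₁) → MemL (FA P A X₂) → MemS (FA P A X₂)) ∧
    (MemA (FA P A X₁) → MemT (FA P A X₂) → MemA (FA P A X₂)) := by
  have := isProbabilityMeasure_FA (P := P) hA hX₁
  have := isProbabilityMeasure_FA (P := P) hA hX₂
  have hequiv : WeakTailEquiv (mTail (FA P A X₁)) (mTail (FA P A X₂)) :=
    hweq.congr' (mTail_FA_eventuallyEq hA hX₁).symm (mTail_FA_eventuallyEq hA hX₂).symm
  have hS : MemS (FA P A X₁) → MemL (FA P A X₂) → MemS (FA P A X₂) :=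
    memS_of_weakTailEquiv (FA_Iio_zero hA hX₁) (FA_Iio_zero hA hX₂) hequiv
  exact ⟨hS, fun h₁ h₂ => ⟨hS h₁.1 h₂.1, h₂.2⟩⟩

end Paper
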